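/- Let $a \le t_0 < t_1 < \cdots < t_n \le b$ and let $p$ be a real polynomial of degree at most $n$ such that $p(t_i) = (-1)^i$ for all $i$ (or $p(t_i) = (-1)^{i+1}$ for all $i$). Then for every $x \notin [a,b]$, $|p(x)| \ge |T_n\left(\frac{2}{b-a}\left(x - \frac{a+b}{2}\right)\right)|$, where $T_n$ is the Chebyshev polynomial of the first kind of degree $n$. -/

import Mathlib

/-!
Let `L` be the affine map sending `[a, b]` onto `[-1, 1]`, so that `|T_n ∘ L| ≤ 1` on `[a, b]`.
If `|p x| < |T_n (L x)|`, put `c = p x / T_n (L x)`, so `|c| < 1`. Then `r = p - c • T_n ∘ L`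
has degree at most `n`, takes the sign of `p` at every node, hence has a root between any two
consecutive nodes, and also vanishes at `x ∉ [a, b]`: these are `n + 1` roots, so `r = 0`,
which is absurd at `t 0` where `|p| = 1 > |c • T_n ∘ L|`.
-/

open Polynomial Set

theorem exists_mem_Ioo_eq_zero_of_mul_neg {α : Type*} [ConditionallyCompleteLinearOrder α]
    [TopologicalSpace α] [OrderTopology α] [DenselyOrdered α] {f : α → ℝ} {u v : α}
    (huv : u ≤ v) (hf : ContinuousOn f (Icc u v)) (h : f u * f v < 0) :
    ∃ c ∈ Ioo u v, f c = 0 := by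
  rcases mul_neg_iff.1 h with ⟨hu, hv⟩ | ⟨hu, hv⟩
  · exact intermediate_value_Ioo' huv hf ⟨hv, hu⟩
  · exact intermediate_value_Ioo huv hf ⟨hu, hv⟩

theorem abs_two_div_mul_sub_midpoint_le_one {a b y : ℝ} (hy : y ∈ Icc a b) :
    |2 / (b - a) * (y - (a + b) / 2)| ≤ 1 := by
  obtain ⟨hay, hyb⟩ := hy
  rcases (hay.trans hyb).eq_or_lt with rfl | hab
  · simp -- `2 / 0 = 0`: the map is constantly `0` when `a = b`
  have hba : 0 < b - a := sub_pos.2 hab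
  rw [abs_le, div_mul_eq_mul_div, le_div_iff₀ hba, div_le_iff₀ hba]
  constructor <;> linarith

namespace Polynomial

theorem natDegree_T_comp_affine_le (n : ℕ) (m k : ℝ) :
    ((Chebyshev.T ℝ n).comp (C m * (X - C k))).natDegree ≤ n := by
  calc _ ≤ (Chebyshev.T ℝ n).natDegree * (C m * (X - C k)).natDegree := natDegree_comp_le
    _ ≤ n * 1 := by
        gcongr
        · simp [Chebyshev.natDegree_T]
        · exact (natDegree_C_mul_le _ _).trans (natDegree_X_sub_C_le _)
    _ = n := mul_one n

variable {n : ℕ} {t : Fin (n + 1) → ℝ}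

theorem eq_zero_of_sign_alternating {r : ℝ[X]} (hr : r.natDegree ≤ n) (ht : StrictMono t)
    (halt : ∀ i : Fin n, r.eval (t i.castSucc) * r.eval (t i.succ) < 0)
    {x : ℝ} (hx : x ∉ Icc (t 0) (t (Fin.last n))) (hrx : r.eval x = 0) : r = 0 := by
  have hroot : ∀ i : Fin n, ∃ c ∈ Ioo (t i.castSucc) (t i.succ), r.eval c = 0 := fun i =>
    exists_mem_Ioo_eq_zero_of_mul_neg (ht Fin.castSucc_lt_succ).le
      r.continuous.continuousOn (halt i)
  choose c hc hrc using hroot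
  have hc_mono : StrictMono c := fun i j hij =>
    calc c i < t i.succ := (hc i).2
      _ ≤ t j.castSucc := ht.monotone (Fin.succ_le_castSucc_iff.2 hij)
      _ < c j := (hc j).1
  have hxc : x ∉ range c := by
    rintro ⟨i, rfl⟩
    exact hx ⟨(ht.monotone (Fin.zero_le _)).trans (hc i).1.le,
      (hc i).2.le.trans (ht.monotone (Fin.le_last _))⟩
  refine eq_zero_of_natDegree_lt_card_of_eval_eq_zero r
    (Fin.cons_injective_of_injective hxc hc_mono.injective) (Fin.cases hrx hrc) ?_
  simpa using Nat.lt_succ_of_le hr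

theorem abs_eval_le_of_sign_alternating {p Q : ℝ[X]} (hp : p.natDegree ≤ n)
    (hQ : Q.natDegree ≤ n) (ht : StrictMono t)
    (halt : ∀ i : Fin n, p.eval (t i.castSucc) * p.eval (t i.succ) < 0)
    (hp0 : ∀ i, p.eval (t i) ≠ 0) (hQp : ∀ i, |Q.eval (t i)| ≤ |p.eval (t i)|)
    {x : ℝ} (hx : x ∉ Icc (t 0) (t (Fin.last n))) : |Q.eval x| ≤ |p.eval x| := by
  by_contra! hlt
  have hQx : Q.eval x ≠ 0 := abs_pos.1 ((abs_nonneg _).trans_lt hlt)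
  set c := p.eval x / Q.eval x
  have hc : |c| < 1 := by
    rw [abs_div]
    exact (div_lt_one (abs_pos.2 hQx)).2 hlt
  have hcQ : ∀ i, |(C c * Q).eval (t i)| < |p.eval (t i)| := fun i => by
    rw [eval_mul, eval_C, abs_mul]
    calc |c| * |Q.eval (t i)| ≤ |c| * |p.eval (t i)| :=
          mul_le_mul_of_nonneg_left (hQp i) (abs_nonneg c)
      _ < |p.eval (t i)| := mul_lt_of_lt_one_left (abs_pos.2 (hp0 i)) hc
  have hsign : ∀ i, 0 < (p - C c * Q).eval (t i) * p.eval (t i) := fun i => by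
    have hlt : (C c * Q).eval (t i) * p.eval (t i) < p.eval (t i) * p.eval (t i) :=
      calc _ ≤ |(C c * Q).eval (t i) * p.eval (t i)| := le_abs_self _
        _ = |(C c * Q).eval (t i)| * |p.eval (t i)| := abs_mul _ _
        _ < |p.eval (t i)| * |p.eval (t i)| :=
          mul_lt_mul_of_pos_right (hcQ i) (abs_pos.2 (hp0 i))
        _ = p.eval (t i) * p.eval (t i) := abs_mul_abs_self _
    rw [eval_sub, sub_mul]
    linarith
  have hpq : p - C c * Q = 0 := by
    refine eq_zero_of_sign_alternating ((natDegree_sub_le _ _).trans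
      (max_le hp ((natDegree_C_mul_le _ _).trans hQ))) ht (fun i => ?_) hx ?_
    · refine neg_of_mul_pos_left ?_ (halt i).le
      convert mul_pos (hsign i.castSucc) (hsign i.succ) using 1
      ring
    · rw [eval_sub, eval_mul, eval_C, div_mul_cancel₀ _ hQx, sub_self]
  rw [sub_eq_zero] at hpq
  exact (hcQ 0).ne (by rw [hpq])

end Polynomial

/-- Chebyshev polynomials have least growth outside `[a,b]` among all
polynomials with the equioscillation property of modulus 1 on `[a,b]`. -/
theorem stmt_8 (n : ℕ) (a b : ℝ) (t : Fin (n + 1) → ℝ) (htmono : StrictMono t)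
    (hta : a ≤ t 0) (htb : t (Fin.last n) ≤ b)
    (p : ℝ[X]) (hd : p.natDegree ≤ n)
    (hp : (∀ i : Fin (n + 1), p.eval (t i) = (-1 : ℝ) ^ (i : ℕ)) ∨
          (∀ i : Fin (n + 1), p.eval (t i) = (-1 : ℝ) ^ ((i : ℕ) + 1))) :
    ∀ x : ℝ, x ∉ Set.Icc a b →
      |(Polynomial.Chebyshev.T ℝ n).eval (2 / (b - a) * (x - (a + b) / 2))| ≤ |p.eval x| := by
  intro x hx
  have habs : ∀ i, |p.eval (t i)| = 1 := fun i => by rcases hp with h | h <;> simp [h]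
  have halt : ∀ i : Fin n, p.eval (t i.castSucc) * p.eval (t i.succ) < 0 := fun i => by
    rcases hp with h | h <;> simp [h, pow_succ, ← mul_pow]
  have ht_mem : ∀ i, t i ∈ Icc a b := fun i =>
    ⟨hta.trans (htmono.monotone (Fin.zero_le i)), (htmono.monotone (Fin.le_last i)).trans htb⟩
  have key := abs_eval_le_of_sign_alternating hd
    (natDegree_T_comp_affine_le n (2 / (b - a)) ((a + b) / 2)) htmono halt
    (fun i => abs_pos.1 (by rw [habs i]; exact one_pos))
    (fun i => by
      simpa [habs i] using
        Chebyshev.abs_eval_T_real_le_one n (abs_two_div_mul_sub_midpoint_le_one (ht_mem i)))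
    (fun h => hx ⟨hta.trans h.1, h.2.trans htb⟩)
  simpa using key
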